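/- Let ω be a fixed sink of a diffeomorphism f of a 3-manifold and Q a solid torus with ω ∈ f(Q) ⊂ int Q ⊂ W^s(ω). If D is a meridian disk of Q disjoint from f(Q) and whose interior is disjoint from ⋃_{n∈ℤ} f^n(∂Q), then int Q \ D contains a 3-ball B with f(Q) ⊂ B ⊂ int Q. -/

import Mathlib

open Set Filter Topology Metric Manifold

noncomputable section

/-- Euclidean model space. -/
abbrev E (n : ℕ) : Type := EuclideanSpace ℝ (Fin n)

/-- The representative of `φ : M → ℝ` in the preferred chart at `p`. -/
def chartRep (n : ℕ) {M : Type} [TopologicalSpace M] [ChartedSpace (E n) M]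
    (φ : M → ℝ) (p : M) : E n → ℝ :=
  φ ∘ (extChartAt (𝓡 n) p).symm

/-- `p` is a critical point of `φ`. -/
def IsCriticalPt (n : ℕ) {M : Type} [TopologicalSpace M] [ChartedSpace (E n) M]
    (φ : M → ℝ) (p : M) : Prop :=
  mfderiv (𝓡 n) 𝓘(ℝ) φ p = 0

/-- Hessian of `φ` at `p`, computed in the preferred chart. -/
def hess (n : ℕ) {M : Type} [TopologicalSpace M] [ChartedSpace (E n) M]
    (φ : M → ℝ) (p : M) : E n →L[ℝ] E n →L[ℝ] ℝ :=
  fderiv ℝ (fderiv ℝ (chartRep n φ p)) (extChartAt (𝓡 n) p p)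

def IsNondegCriticalPt (n : ℕ) {M : Type} [TopologicalSpace M] [ChartedSpace (E n) M]
    (φ : M → ℝ) (p : M) : Prop :=
  IsCriticalPt n φ p ∧ ∀ v : E n, v ≠ 0 → ∃ w : E n, hess n φ p v w ≠ 0

/-- Morse index of `φ` at `p`: maximal dimension of a subspace on which the Hessian
is negative definite. -/
def morseIndexAt (n : ℕ) {M : Type} [TopologicalSpace M] [ChartedSpace (E n) M]
    (φ : M → ℝ) (p : M) : ℕ :=
  sSup {k | ∃ S : Submodule ℝ (E n), Module.finrank ℝ S = k ∧
      ∀ v ∈ S, v ≠ 0 → hess n φ p v v < 0}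

/-- A Morse function: smooth, with all critical points nondegenerate. -/
def IsMorseFunction (n : ℕ) {M : Type} [TopologicalSpace M] [ChartedSpace (E n) M]
    (φ : M → ℝ) : Prop :=
  ContMDiff (𝓡 n) 𝓘(ℝ) (⊤ : ℕ∞) φ ∧ ∀ p : M, IsCriticalPt n φ p → IsNondegCriticalPt n φ p

def criticalSet (n : ℕ) {M : Type} [TopologicalSpace M] [ChartedSpace (E n) M]
    (φ : M → ℝ) : Set M :=
  {p | IsCriticalPt n φ p}


/-- The basin (stable set) of a point `ω` under a map `f`:
points whose forward orbit converges to `ω`. -/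
def basin {M : Type} [TopologicalSpace M] (f : M → M) (ω : M) : Set M :=
  {x | Filter.Tendsto (fun k => f^[k] x) Filter.atTop (nhds ω)}

/-- `ω` is an attracting fixed point (sink) of `f`. -/
def IsSink {M : Type} [TopologicalSpace M] (f : M → M) (ω : M) : Prop :=
  f ω = ω ∧ ∃ U ∈ nhds ω, f '' U ⊆ U ∧ U ⊆ basin f ω

/-- `B` is an embedded (closed) 3-ball, whose boundary sphere is its frontier. -/
def IsBall3 {M : Type} [TopologicalSpace M] (B : Set M) : Prop :=
  ∃ e : ↥(Metric.closedBall (0 : E 3) 1) ≃ₜ ↥B,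
    (fun p => (e p : M)) '' {p | ‖(p : E 3)‖ = 1} = frontier B

/-- `T` is an embedded solid torus `S¹ × D²`, whose boundary torus is its frontier. -/
def IsSolidTorus {M : Type} [TopologicalSpace M] (T : Set M) : Prop :=
  ∃ e : (Metric.sphere (0 : E 2) 1 × Metric.closedBall (0 : E 2) 1) ≃ₜ ↥T,
    (fun p => (e p : M)) '' {p | ‖(p.2 : E 2)‖ = 1} = frontier T

/-- `D` is an embedded (closed) 2-disc with boundary circle `∂D`. -/
def IsDisk2 {M : Type} [TopologicalSpace M] (D bdD : Set M) : Prop :=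
  ∃ e : ↥(Metric.closedBall (0 : E 2) 1) ≃ₜ ↥D,
    (fun p => (e p : M)) '' {p | ‖(p : E 2)‖ = 1} = bdD

/-- `D` is a meridian disk of the solid torus `T`: in some product structure
`T ≅ S¹ × D²` (compatible with the frontier), `D` is a fiber `{z} × D²`. -/
def IsMeridianDisk {M : Type} [TopologicalSpace M] (D T : Set M) : Prop :=
  ∃ e : (Metric.sphere (0 : E 2) 1 × Metric.closedBall (0 : E 2) 1) ≃ₜ ↥T,
    (fun p => (e p : M)) '' {p | ‖(p.2 : E 2)‖ = 1} = frontier T ∧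
    ∃ z : Metric.sphere (0 : E 2) 1, (fun p => (e p : M)) '' {p | p.1 = z} = D

/-- `f` is a (smooth) diffeomorphism of the manifold `M`, given as a homeomorphism
smooth in both directions. -/
def IsDiffeo (n : ℕ) {M : Type} [TopologicalSpace M] [ChartedSpace (E n) M]
    (f : M ≃ₜ M) : Prop :=
  ContMDiff (𝓡 n) (𝓡 n) (⊤ : ℕ∞) f ∧ ContMDiff (𝓡 n) (𝓡 n) (⊤ : ℕ∞) f.symm

/-!
Cutting the solid torus `S¹ × D²` along the meridian disk `{z} × D²` leaves, inside its
interior, the open cell `(S¹ \ {z}) × int D² ≅ ℝ × ℝ² ≅ ℝ³`. Since `f(Q)` is compact and lies in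
`int Q \ D`, it is contained in the image of a large round ball of this chart, which is the
required 3-ball.
-/

def stereographicHomeomorph {F : Type*} [NormedAddCommGroup F] [InnerProductSpace ℝ F] {n : ℕ}
    [Fact (Module.finrank ℝ F = n + 1)] (v : sphere (0 : F) 1) :
    ({v}ᶜ : Set (sphere (0 : F) 1)) ≃ₜ EuclideanSpace ℝ (Fin n) :=
  (Homeomorph.setCongr (stereographic'_source v).symm).trans <|
    (stereographic' n v).toHomeomorphSourceTarget.trans <|
      (Homeomorph.setCongr (stereographic'_target v)).trans (Homeomorph.Set.univ _)

def openUnitBallHomeomorph {F : Type*} [NormedAddCommGroup F] [NormedSpace ℝ F] :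
    (Subtype.val ⁻¹' ball 0 1 : Set (closedBall (0 : F) 1)) ≃ₜ F :=
  (IsEmbedding.subtypeVal.homeomorphOfSubsetRange
    (Subtype.range_coe ▸ ball_subset_closedBall)).trans Homeomorph.unitBall.symm

def meridianComplHomeomorph {F G : Type*} [NormedAddCommGroup F] [InnerProductSpace ℝ F] {n : ℕ}
    [Fact (Module.finrank ℝ F = n + 1)] [NormedAddCommGroup G] [NormedSpace ℝ G]
    (v : sphere (0 : F) 1) :
    ↥(({v}ᶜ : Set (sphere (0 : F) 1)) ×ˢ
        (Subtype.val ⁻¹' ball (0 : G) 1 : Set (closedBall (0 : G) 1))) ≃ₜ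
      EuclideanSpace ℝ (Fin n) × G :=
  (Homeomorph.Set.prod _ _).trans ((stereographicHomeomorph v).prodCongr openUnitBallHomeomorph)

lemma Topology.IsOpenEmbedding.interior_image {X Y : Type*} [TopologicalSpace X]
    [TopologicalSpace Y] {ψ : X → Y} (hψ : IsOpenEmbedding ψ) (s : Set X) :
    interior (ψ '' s) = ψ '' interior s := by
  refine subset_antisymm ?_ (hψ.isOpenMap.image_interior_subset s)
  have hrange : interior (ψ '' s) ⊆ range ψ := interior_subset.trans (image_subset_range ψ s)
  rw [← image_preimage_eq_of_subset hrange,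
    hψ.isOpenMap.preimage_interior_eq_interior_preimage hψ.continuous,
    preimage_image_eq s hψ.injective]

lemma Topology.IsOpenEmbedding.frontier_image_of_isCompact {X Y : Type*} [TopologicalSpace X]
    [TopologicalSpace Y] [T2Space X] [T2Space Y] {ψ : X → Y} (hψ : IsOpenEmbedding ψ)
    {K : Set X} (hK : IsCompact K) : frontier (ψ '' K) = ψ '' frontier K := by
  rw [(hK.image hψ.continuous).isClosed.frontier_eq, hK.isClosed.frontier_eq,
    hψ.interior_image, image_sdiff hψ.injective]

section

variable {M : Type} [TopologicalSpace M]

lemma IsSolidTorus.isCompact {T : Set M} (hT : IsSolidTorus T) : IsCompact T := by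
  obtain ⟨e, -⟩ := hT
  simpa using isCompact_range (continuous_subtype_val.comp e.continuous)

variable [T2Space M]

lemma IsMeridianDisk.exists_isOpenEmbedding {D T : Set M} (hD : IsMeridianDisk D T) :
    ∃ ψ : E 3 → M, IsOpenEmbedding ψ ∧ range ψ = interior T \ D := by
  obtain ⟨e, hfr, z, rfl⟩ := hD
  set c : sphere (0 : E 2) 1 × closedBall (0 : E 2) 1 → M := fun p => (e p : M)
  have hc : IsClosedEmbedding c := (continuous_subtype_val.comp e.continuous).isClosedEmbedding
    (Subtype.val_injective.comp e.injective)
  have hT : T = range c := by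
    rw [show c = Subtype.val ∘ e from rfl, range_comp, e.range_coe, image_univ, Subtype.range_coe]
  set S := ({z}ᶜ : Set (sphere (0 : E 2) 1)) ×ˢ
    (Subtype.val ⁻¹' ball (0 : E 2) 1 : Set (closedBall (0 : E 2) 1))
  have hTc : IsClosed T := hT ▸ hc.isClosed_range
  have hS : interior T \ c '' {p | p.1 = z} = c '' S := by
    have hint : interior T = c '' {p | ‖(p.2 : E 2)‖ = 1}ᶜ := by
      rw [← range_sdiff_image hc.injective, hfr, ← hT, hTc.frontier_eq,
        sdiff_sdiff_cancel_left interior_subset]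
    rw [hint, ← image_sdiff hc.injective]
    congr 1
    ext ⟨x, y, hy⟩
    simp only [Set.mem_sdiff, mem_compl_iff, S, mem_prod, mem_singleton_iff,
      mem_preimage, mem_ball_zero_iff]
    have hy_le := mem_closedBall_zero_iff.mp hy
    constructor
    · rintro ⟨hy_ne, hxz⟩; exact ⟨hxz, lt_of_le_of_ne hy_le hy_ne⟩
    · rintro ⟨hxz, hy_lt⟩; exact ⟨hy_lt.ne, hxz⟩
  have : Fact (Module.finrank ℝ (E 2) = 1 + 1) := ⟨by simp⟩
  let H : S ≃ₜ E 3 := (meridianComplHomeomorph z).trans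
    (ContinuousLinearEquiv.ofFinrankEq (𝕜 := ℝ) (E := E 1 × E 2) (F := E 3)
      (by simp [Module.finrank_prod])).toHomeomorph
  have hrange : range (c ∘ Subtype.val ∘ H.symm) = interior T \ c '' {p | p.1 = z} := by
    rw [hS, range_comp, range_comp, H.symm.range_coe, image_univ, Subtype.range_coe]
  refine ⟨c ∘ Subtype.val ∘ H.symm, ⟨?_, ?_⟩, hrange⟩
  · exact hc.isEmbedding.comp (IsEmbedding.subtypeVal.comp H.symm.isEmbedding)
  · rw [hrange]
    exact isOpen_interior.sdiff (hc.isClosedMap _ (isClosed_eq continuous_fst continuous_const))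

end

section

variable {M : Type} [TopologicalSpace M] [T2Space M] {ψ : E 3 → M}

lemma Topology.IsOpenEmbedding.isBall3_image_closedBall (hψ : IsOpenEmbedding ψ) :
    IsBall3 (ψ '' closedBall 0 1) := by
  refine ⟨hψ.isEmbedding.homeomorphImage _, ?_⟩
  rw [hψ.frontier_image_of_isCompact (isCompact_closedBall 0 1),
    frontier_closedBall (0 : E 3) one_ne_zero]
  change (ψ ∘ Subtype.val) '' _ = _
  rw [image_comp]
  congr 1
  ext x
  constructor
  · rintro ⟨p, hp, rfl⟩
    exact mem_sphere_zero_iff_norm.mpr hp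
  · intro hx
    exact ⟨⟨x, sphere_subset_closedBall hx⟩, mem_sphere_zero_iff_norm.mp hx, rfl⟩

lemma Topology.IsOpenEmbedding.exists_isBall3_superset (hψ : IsOpenEmbedding ψ) {K : Set M}
    (hK : IsCompact K) (hKψ : K ⊆ range ψ) : ∃ B, IsBall3 B ∧ K ⊆ B ∧ B ⊆ range ψ := by
  obtain ⟨r, hr⟩ := (hψ.isInducing.isCompact_preimage' hK hKψ).isBounded.subset_closedBall 0
  set R := max r 1
  have hR : 0 < R := zero_lt_one.trans_le (le_max_right r 1)
  let φ := ψ ∘ Homeomorph.smulOfNeZero R hR.ne'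
  have hφ : IsOpenEmbedding φ := hψ.comp (Homeomorph.smulOfNeZero R hR.ne').isOpenEmbedding
  refine ⟨φ '' closedBall 0 1, hφ.isBall3_image_closedBall, ?_,
    (image_subset_range φ _).trans (range_comp_subset_range _ ψ)⟩
  intro y hy
  obtain ⟨x, rfl⟩ := hKψ hy
  refine ⟨R⁻¹ • x, ?_, by simp [φ, smul_inv_smul₀ hR.ne']⟩
  have hxR : ‖x‖ ≤ R := (mem_closedBall_zero_iff.mp (hr hy)).trans (le_max_left r 1)
  rw [mem_closedBall_zero_iff, norm_smul, norm_inv, Real.norm_of_nonneg hR.le]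
  exact inv_mul_le_one_of_le₀ hxR hR.le

end

theorem stmt_6_general
    (M : Type) [TopologicalSpace M] [T2Space M]
    (f : M ≃ₜ M)
    (Q : Set M) (hQ : IsSolidTorus Q)
    (hQ1 : f '' Q ⊆ interior Q)
    (D : Set M) (hD : IsMeridianDisk D Q)
    (hDf : Disjoint D (f '' Q)) :
    ∃ B : Set M, IsBall3 B ∧ f '' Q ⊆ B ∧ B ⊆ interior Q ∧ B ⊆ interior Q \ D := by
  obtain ⟨ψ, hψ, hψD⟩ := hD.exists_isOpenEmbedding
  have hfQ : f '' Q ⊆ interior Q \ D := fun y hy => ⟨hQ1 hy, fun hyD => hDf.ne_of_mem hyD hy rfl⟩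
  obtain ⟨B, hB, hQB, hBψ⟩ :=
    hψ.exists_isBall3_superset (hQ.isCompact.image f.continuous) (hψD ▸ hfQ)
  rw [hψD] at hBψ
  exact ⟨B, hB, hQB, hBψ.trans sdiff_subset, hBψ⟩

/-- if ω is a fixed sink of a diffeomorphism f of a 3-manifold, Q a solid
torus with ω ∈ f(Q) ⊂ int Q ⊂ W^s(ω), and D a meridian disk of Q disjoint from f(Q)
whose interior misses ⋃ₙ f^n(∂Q) (n ∈ ℤ), then int Q \ D contains a 3-ball B with
f(Q) ⊂ B ⊂ int Q. -/
theorem stmt_6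
    (M : Type) [TopologicalSpace M] [T2Space M]
    [ChartedSpace (E 3) M] [IsManifold (𝓡 3) ((⊤ : ℕ∞) : WithTop ℕ∞) M]
    (f : M ≃ₜ M) (hf : IsDiffeo 3 f)
    (ω : M) (hω : IsSink f ω)
    (Q : Set M) (hQ : IsSolidTorus Q)
    (hωQ : ω ∈ f '' Q) (hQ1 : f '' Q ⊆ interior Q) (hQ2 : Q ⊆ basin f ω)
    (D : Set M) (hD : IsMeridianDisk D Q)
    (hDf : Disjoint D (f '' Q))
    (hDG : ∀ n : ℕ, Disjoint (D \ frontier Q) (f^[n] '' frontier Q) ∧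
      Disjoint (D \ frontier Q) (f.symm^[n] '' frontier Q)) :
    ∃ B : Set M, IsBall3 B ∧ f '' Q ⊆ B ∧ B ⊆ interior Q ∧ B ⊆ interior Q \ D :=
  stmt_6_general M f Q hQ hQ1 D hD hDf
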